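/- For every real number ℓ ≥ 0, every real number δ > 0, and every finite set P of r-cliques of G, let S_ℓ denote the set of r-cliques of G not in P whose (r,s)-clique core number is at most ℓ, and let F_ℓ denote the set of r-cliques of G not in P whose (r,s)-clique core number is at most ℓ and whose residual s-clique-degree with respect to P is strictly greater than ℓ · (C(s,r) + δ), where C(s,r) denotes the binomial coefficient s choose r. Then |F_ℓ| ≤ C(s,r) · |S_ℓ| / (C(s,r) + δ). -/

import Mathlib

/-!
Put `k = ⌊ℓ⌋` and let `T` be the set of residual `s`-cliques containing a member of `F_ℓ`.
In a nonempty family of `s`-cliques one of whose members contains an `r`-set of core number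
`≤ k`, some `r`-clique of core number `≤ k` lies in at most `k` members of the family: otherwise
the family, enlarged by families witnessing core number `≥ k + 1` for all the other `r`-cliques,
would witness core number `≥ k + 1` for that `r`-set. Peeling off such `r`-cliques one at a time
gives `|T| ≤ k |S_ℓ|` (they avoid `P` because `T` is residual). Double counting the pairs
`R ⊆ S` with `R ∈ F_ℓ`, `S ∈ T` then gives
`ℓ (C(s,r) + δ) |F_ℓ| < ∑_{R ∈ F_ℓ} residualDeg R ≤ C(s,r) |T| ≤ C(s,r) ℓ |S_ℓ|`.
-/

open Finset

variable {V : Type*}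

/-- The `(r,s)`-clique core number of an `r`-clique `R` in `G`: the largest `c ≥ 1` for which
there is a set `𝒮` of `s`-cliques of `G` such that `R` is contained in at least one member of
`𝒮` and every `r`-clique contained in any member of `𝒮` is contained in at least `c` members
of `𝒮`; `0` if no such `c` exists. -/
noncomputable def coreNumber [Fintype V] [DecidableEq V] (G : SimpleGraph V)
    [DecidableRel G.Adj] (r s : ℕ) (R : Finset V) : ℕ :=
  sSup {c : ℕ | 1 ≤ c ∧ ∃ 𝒮 : Finset (Finset V),
    (∀ S ∈ 𝒮, S ∈ G.cliqueFinset s) ∧ (∃ S ∈ 𝒮, R ⊆ S) ∧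
    ∀ R' ∈ G.cliqueFinset r, (∃ S ∈ 𝒮, R' ⊆ S) →
      c ≤ (𝒮.filter (fun S => R' ⊆ S)).card}

/-- The residual `s`-clique-degree of an `r`-clique `R` with respect to a peeled set `P`:
the number of `s`-cliques of `G` containing `R` and containing no member of `P`. -/
def residualDeg [Fintype V] [DecidableEq V] (G : SimpleGraph V) [DecidableRel G.Adj]
    (s : ℕ) (P : Finset (Finset V)) (R : Finset V) : ℕ :=
  ((G.cliqueFinset s).filter (fun S => R ⊆ S ∧ ∀ Q ∈ P, ¬ Q ⊆ S)).card

theorem sum_card_filter_superset_le_choose_mul {α : Type*} [DecidableEq α]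
    {𝒜 𝒯 : Finset (Finset α)} {r s : ℕ} (h𝒜 : ∀ A ∈ 𝒜, #A = r) (h𝒯 : ∀ S ∈ 𝒯, #S = s) :
    ∑ A ∈ 𝒜, #{S ∈ 𝒯 | A ⊆ S} ≤ s.choose r * #𝒯 := by
  have hbelow : ∀ S ∈ 𝒯, #{A ∈ 𝒜 | A ⊆ S} ≤ s.choose r := fun S hS => calc
    #{A ∈ 𝒜 | A ⊆ S} ≤ #(S.powersetCard r) := card_le_card fun A hA => by
      rw [mem_filter] at hA
      exact mem_powersetCard.mpr ⟨hA.2, h𝒜 A hA.1⟩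
    _ = s.choose r := by rw [card_powersetCard, h𝒯 S hS]
  calc ∑ A ∈ 𝒜, #{S ∈ 𝒯 | A ⊆ S} = ∑ S ∈ 𝒯, #{A ∈ 𝒜 | A ⊆ S} := by
        simp only [card_filter]; exact sum_comm
    _ ≤ #𝒯 • s.choose r := sum_le_card_nsmul _ _ _ hbelow
    _ = s.choose r * #𝒯 := by rw [smul_eq_mul, mul_comm]

section CoreNumber

variable [Fintype V] [DecidableEq V] {G : SimpleGraph V} [DecidableRel G.Adj] {r s c k : ℕ}

variable (G r s c) in
/-- `𝒮` witnesses core number at least `c` for every `r`-set contained in one of its members. -/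
def IsCoreFamily (𝒮 : Finset (Finset V)) : Prop :=
  (∀ S ∈ 𝒮, S ∈ G.cliqueFinset s) ∧
    ∀ R ∈ G.cliqueFinset r, (∃ S ∈ 𝒮, R ⊆ S) → c ≤ #{S ∈ 𝒮 | R ⊆ S}

namespace IsCoreFamily

variable {𝒮 𝒮' : Finset (Finset V)} {R S : Finset V}

theorem mono (h : IsCoreFamily G r s c 𝒮) (hc : k ≤ c) : IsCoreFamily G r s k 𝒮 :=
  ⟨h.1, fun R hR hRS => hc.trans (h.2 R hR hRS)⟩

theorem le_card_filter_of_subset (h : IsCoreFamily G r s c 𝒮) (h𝒮 : 𝒮 ⊆ 𝒮')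
    (hR : R ∈ G.cliqueFinset r) (hS : S ∈ 𝒮) (hRS : R ⊆ S) : c ≤ #{S ∈ 𝒮' | R ⊆ S} :=
  (h.2 R hR ⟨S, hS, hRS⟩).trans (card_le_card (filter_subset_filter _ h𝒮))

theorem le_card_cliqueFinset (h : IsCoreFamily G r s c 𝒮) (hrs : r ≤ s) (hS : S ∈ 𝒮) :
    c ≤ #(G.cliqueFinset s) := by
  obtain ⟨hclique, hcard⟩ := SimpleGraph.mem_cliqueFinset_iff.mp (h.1 S hS)
  obtain ⟨R, hRS, hR⟩ := exists_subset_card_eq (hcard ▸ hrs : r ≤ #S)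
  calc c ≤ #{S ∈ 𝒮 | R ⊆ S} :=
        h.2 R (SimpleGraph.mem_cliqueFinset_iff.mpr ⟨hclique.subset hRS, hR⟩) ⟨S, hS, hRS⟩
    _ ≤ #𝒮 := card_filter_le _ _
    _ ≤ #(G.cliqueFinset s) := card_le_card h.1

end IsCoreFamily

theorem coreNumber_eq_sSup (R : Finset V) : coreNumber G r s R =
    sSup {c | 1 ≤ c ∧ ∃ 𝒮, IsCoreFamily G r s c 𝒮 ∧ ∃ S ∈ 𝒮, R ⊆ S} := by
  simp only [coreNumber, IsCoreFamily, and_assoc, and_comm (a := ∃ S ∈ _, R ⊆ S)]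

theorem le_coreNumber_iff (hrs : r ≤ s) (hc : 1 ≤ c) {R : Finset V} :
    c ≤ coreNumber G r s R ↔ ∃ 𝒮, IsCoreFamily G r s c 𝒮 ∧ ∃ S ∈ 𝒮, R ⊆ S := by
  have hbdd : BddAbove {c | 1 ≤ c ∧ ∃ 𝒮, IsCoreFamily G r s c 𝒮 ∧ ∃ S ∈ 𝒮, R ⊆ S} :=
    ⟨#(G.cliqueFinset s), fun _ ⟨_, _, h, _, hS, _⟩ => h.le_card_cliqueFinset hrs hS⟩
  rw [coreNumber_eq_sSup]
  constructor
  · intro hle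
    have hne : {c | 1 ≤ c ∧ ∃ 𝒮, IsCoreFamily G r s c 𝒮 ∧ ∃ S ∈ 𝒮, R ⊆ S}.Nonempty := by
      by_contra hempty
      rw [Set.not_nonempty_iff_eq_empty.mp hempty, csSup_empty, le_bot_iff, Nat.bot_eq_zero] at hle
      omega
    obtain ⟨-, 𝒮, h, hR⟩ := Nat.sSup_mem hne hbdd
    exact ⟨𝒮, h.mono hle, hR⟩
  · rintro ⟨𝒮, h, hR⟩
    exact le_csSup hbdd ⟨hc, 𝒮, h, hR⟩

theorem exists_coreNumber_le_and_card_filter_le (hrs : r ≤ s) {𝒯 : Finset (Finset V)}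
    (h𝒯 : ∀ S ∈ 𝒯, S ∈ G.cliqueFinset s) {R₀ S₀ : Finset V} (hS₀ : S₀ ∈ 𝒯) (hR₀ : R₀ ⊆ S₀)
    (hR₀k : coreNumber G r s R₀ ≤ k) :
    ∃ R ∈ G.cliqueFinset r, coreNumber G r s R ≤ k ∧ (∃ S ∈ 𝒯, R ⊆ S) ∧
      #{S ∈ 𝒯 | R ⊆ S} ≤ k := by
  by_contra! hdeg
  have hk : 1 ≤ k + 1 := Nat.le_add_left 1 k
  have hhigh : ∀ R ∈ {R ∈ G.cliqueFinset r | k < coreNumber G r s R},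
      ∃ 𝒲, IsCoreFamily G r s (k + 1) 𝒲 ∧ ∃ S ∈ 𝒲, R ⊆ S := fun R hR =>
    (le_coreNumber_iff hrs hk).mp (mem_filter.mp hR).2
  choose! W hW hRW using hhigh
  set 𝒮 := 𝒯 ∪ {R ∈ G.cliqueFinset r | k < coreNumber G r s R}.biUnion W
  have hcore : IsCoreFamily G r s (k + 1) 𝒮 := by
    refine ⟨fun S hS => ?_, fun R hR ⟨S, hS, hRS⟩ => ?_⟩
    · obtain hS | hS := mem_union.mp hS
      · exact h𝒯 S hS
      · obtain ⟨R, hR, hS⟩ := mem_biUnion.mp hS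
        exact (hW R hR).1 S hS
    have hW𝒮 : ∀ R ∈ {R ∈ G.cliqueFinset r | k < coreNumber G r s R}, W R ⊆ 𝒮 := fun R hR =>
      (subset_biUnion_of_mem W hR).trans subset_union_right
    obtain hS | hS := mem_union.mp hS
    · by_cases hRk : coreNumber G r s R ≤ k
      · exact (hdeg R hR hRk ⟨S, hS, hRS⟩).trans_le
          (card_le_card (filter_subset_filter _ subset_union_left))
      · have hRhigh : R ∈ {R ∈ G.cliqueFinset r | k < coreNumber G r s R} :=
          mem_filter.mpr ⟨hR, not_le.mp hRk⟩
        obtain ⟨S', hS', hRS'⟩ := hRW R hRhigh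
        exact (hW R hRhigh).le_card_filter_of_subset (hW𝒮 R hRhigh) hR hS' hRS'
    · obtain ⟨R', hR', hS⟩ := mem_biUnion.mp hS
      exact (hW R' hR').le_card_filter_of_subset (hW𝒮 R' hR') hR hS hRS
  have := (le_coreNumber_iff hrs hk).mpr ⟨𝒮, hcore, S₀, mem_union_left _ hS₀, hR₀⟩
  omega

variable (G r s k) in
noncomputable def lowCoreCliques (𝒯 : Finset (Finset V)) : Finset (Finset V) :=
  {R ∈ G.cliqueFinset r | coreNumber G r s R ≤ k ∧ ∃ S ∈ 𝒯, R ⊆ S}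

theorem card_le_mul_card_lowCoreCliques (hrs : r ≤ s) (𝒯 : Finset (Finset V))
    (h𝒯 : ∀ S ∈ 𝒯, S ∈ G.cliqueFinset s ∧ ∃ R ⊆ S, coreNumber G r s R ≤ k) :
    #𝒯 ≤ k * #(lowCoreCliques G r s k 𝒯) := by
  induction 𝒯 using Finset.strongInduction with
  | H 𝒯 ih =>
  obtain rfl | ⟨S₀, hS₀⟩ := 𝒯.eq_empty_or_nonempty
  · simp
  obtain ⟨R₀, hR₀, hR₀k⟩ := (h𝒯 S₀ hS₀).2
  obtain ⟨R, hR, hRk, ⟨S₁, hS₁, hRS₁⟩, hdeg⟩ :=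
    exists_coreNumber_le_and_card_filter_le hrs (fun S hS => (h𝒯 S hS).1) hS₀ hR₀ hR₀k
  set 𝒯' := {S ∈ 𝒯 | ¬R ⊆ S}
  have h𝒯' : 𝒯' ⊂ 𝒯 := filter_ssubset.mpr ⟨S₁, hS₁, not_not.mpr hRS₁⟩
  have hRlow : R ∈ lowCoreCliques G r s k 𝒯 := mem_filter.mpr ⟨hR, hRk, S₁, hS₁, hRS₁⟩
  have hlow : lowCoreCliques G r s k 𝒯' ⊆ (lowCoreCliques G r s k 𝒯).erase R := by
    intro R' hR'
    obtain ⟨hR'c, hR'k, S, hS, hR'S⟩ := mem_filter.mp hR'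
    obtain ⟨hS𝒯, hRS⟩ := mem_filter.mp hS
    refine mem_erase.mpr ⟨?_, mem_filter.mpr ⟨hR'c, hR'k, S, hS𝒯, hR'S⟩⟩
    rintro rfl
    exact hRS hR'S
  have hcard : #(lowCoreCliques G r s k 𝒯') + 1 ≤ #(lowCoreCliques G r s k 𝒯) :=
    (card_le_card hlow).trans_lt (card_erase_lt_of_mem hRlow)
  calc #𝒯 = #{S ∈ 𝒯 | R ⊆ S} + #𝒯' := (card_filter_add_card_filter_not _).symm
    _ ≤ k + k * #(lowCoreCliques G r s k 𝒯') :=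
      add_le_add hdeg (ih 𝒯' h𝒯' fun S hS => h𝒯 S (mem_filter.mp hS).1)
    _ = k * (#(lowCoreCliques G r s k 𝒯') + 1) := by ring
    _ ≤ k * #(lowCoreCliques G r s k 𝒯) := Nat.mul_le_mul_left k hcard

variable (G s) in
def residualThrough (P 𝒜 : Finset (Finset V)) : Finset (Finset V) :=
  {S ∈ G.cliqueFinset s | (∀ Q ∈ P, ¬Q ⊆ S) ∧ ∃ R ∈ 𝒜, R ⊆ S}

theorem card_residualThrough_le (hrs : r ≤ s) (P : Finset (Finset V)) {𝒜 : Finset (Finset V)}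
    (h𝒜 : ∀ R ∈ 𝒜, coreNumber G r s R ≤ k) :
    #(residualThrough G s P 𝒜) ≤
      k * #{R ∈ G.cliqueFinset r | R ∉ P ∧ coreNumber G r s R ≤ k} := by
  have hlow : lowCoreCliques G r s k (residualThrough G s P 𝒜) ⊆
      {R ∈ G.cliqueFinset r | R ∉ P ∧ coreNumber G r s R ≤ k} := fun R hR => by
    obtain ⟨hRc, hRk, S, hS, hRS⟩ := mem_filter.mp hR
    exact mem_filter.mpr ⟨hRc, fun hRP => (mem_filter.mp hS).2.1 R hRP hRS, hRk⟩
  refine (card_le_mul_card_lowCoreCliques hrs _ fun S hS => ?_).trans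
    (Nat.mul_le_mul_left k (card_le_card hlow))
  obtain ⟨hSc, -, R, hR, hRS⟩ := mem_filter.mp hS
  exact ⟨hSc, R, hRS, h𝒜 R hR⟩

theorem sum_residualDeg_le_choose_mul (P : Finset (Finset V)) {𝒜 : Finset (Finset V)}
    (h𝒜 : ∀ R ∈ 𝒜, R ∈ G.cliqueFinset r) :
    ∑ R ∈ 𝒜, residualDeg G s P R ≤ s.choose r * #(residualThrough G s P 𝒜) := by
  have hdeg (R) (hR : R ∈ 𝒜) :
      residualDeg G s P R = #{S ∈ residualThrough G s P 𝒜 | R ⊆ S} := by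
    rw [residualDeg, residualThrough, filter_filter]
    exact congrArg card (filter_congr fun S _ =>
      ⟨fun h => ⟨⟨h.2, R, hR, h.1⟩, h.1⟩, fun h => ⟨h.2, h.1.1⟩⟩)
  rw [sum_congr rfl hdeg]
  exact sum_card_filter_superset_le_choose_mul
    (fun R hR => (SimpleGraph.mem_cliqueFinset_iff.mp (h𝒜 R hR)).2)
    (fun S hS => (SimpleGraph.mem_cliqueFinset_iff.mp (mem_filter.mp hS).1).2)

end CoreNumber

theorem stmt1_general [Fintype V] [DecidableEq V] (G : SimpleGraph V) [DecidableRel G.Adj]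
    (r s : ℕ) (hrs : r < s)
    (ℓ : ℝ) (hℓ : 0 ≤ ℓ) (δ : ℝ) (hδ : 0 < δ)
    (P : Finset (Finset V))
    (Sl : Finset (Finset V))
    (hSl : Sl = (G.cliqueFinset r).filter
      (fun R => R ∉ P ∧ (coreNumber G r s R : ℝ) ≤ ℓ))
    (Fl : Finset (Finset V))
    (hFl : Fl = (G.cliqueFinset r).filter
      (fun R => R ∉ P ∧ (coreNumber G r s R : ℝ) ≤ ℓ ∧
        ℓ * ((s.choose r : ℝ) + δ) < (residualDeg G s P R : ℝ))) :
    (Fl.card : ℝ) ≤ (s.choose r : ℝ) * (Sl.card : ℝ) / ((s.choose r : ℝ) + δ) := by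
  have hFl_mem (R) (hR : R ∈ Fl) : R ∈ G.cliqueFinset r ∧ coreNumber G r s R ≤ ⌊ℓ⌋₊ ∧
      ℓ * ((s.choose r : ℝ) + δ) < residualDeg G s P R := by
    rw [hFl, mem_filter] at hR
    exact ⟨hR.1, Nat.le_floor hR.2.2.1, hR.2.2.2⟩
  have hSl' : {R ∈ G.cliqueFinset r | R ∉ P ∧ coreNumber G r s R ≤ ⌊ℓ⌋₊} = Sl := by
    rw [hSl]
    exact filter_congr fun R _ => by rw [Nat.le_floor_iff hℓ]
  have hpeel := card_residualThrough_le hrs.le P fun R hR => (hFl_mem R hR).2.1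
  have hsum := sum_residualDeg_le_choose_mul (s := s) P fun R hR => (hFl_mem R hR).1
  rw [hSl'] at hpeel
  obtain rfl | hne := Fl.eq_empty_or_nonempty
  · simp only [card_empty, Nat.cast_zero]
    positivity
  rw [le_div_iff₀ (by positivity)]
  refine (lt_of_mul_lt_mul_left ?_ hℓ).le
  calc ℓ * (#Fl * ((s.choose r : ℝ) + δ)) = ∑ _R ∈ Fl, ℓ * ((s.choose r : ℝ) + δ) := by
        rw [sum_const, nsmul_eq_mul]; ring
    _ < ∑ R ∈ Fl, (residualDeg G s P R : ℝ) :=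
        sum_lt_sum_of_nonempty hne fun R hR => (hFl_mem R hR).2.2
    _ ≤ s.choose r * #(residualThrough G s P Fl) := by exact_mod_cast hsum
    _ ≤ s.choose r * (⌊ℓ⌋₊ * #Sl) := by gcongr; exact_mod_cast hpeel
    _ ≤ s.choose r * (ℓ * #Sl) := by gcongr; exact Nat.floor_le hℓ
    _ = ℓ * (s.choose r * #Sl) := by ring

/-- For every real `ℓ ≥ 0`, real `δ > 0`, and finite set `P` of `r`-cliques of `G`, letting
`Sl` be the set of `r`-cliques not in `P` with core number at most `ℓ`, and `Fl` the set of
`r`-cliques not in `P` with core number at most `ℓ` and residual `s`-clique-degree (w.r.t. `P`)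
strictly greater than `ℓ * (C(s,r) + δ)`, we have `|Fl| ≤ C(s,r) * |Sl| / (C(s,r) + δ)`. -/
theorem stmt1 [Fintype V] [DecidableEq V] (G : SimpleGraph V) [DecidableRel G.Adj]
    (r s : ℕ) (hr : 1 ≤ r) (hrs : r < s)
    (ℓ : ℝ) (hℓ : 0 ≤ ℓ) (δ : ℝ) (hδ : 0 < δ)
    (P : Finset (Finset V)) (hP : ∀ Q ∈ P, Q ∈ G.cliqueFinset r)
    (Sl : Finset (Finset V))
    (hSl : Sl = (G.cliqueFinset r).filter
      (fun R => R ∉ P ∧ (coreNumber G r s R : ℝ) ≤ ℓ))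
    (Fl : Finset (Finset V))
    (hFl : Fl = (G.cliqueFinset r).filter
      (fun R => R ∉ P ∧ (coreNumber G r s R : ℝ) ≤ ℓ ∧
        ℓ * ((s.choose r : ℝ) + δ) < (residualDeg G s P R : ℝ))) :
    (Fl.card : ℝ) ≤ (s.choose r : ℝ) * (Sl.card : ℝ) / ((s.choose r : ℝ) + δ) :=
  stmt1_general G r s hrs ℓ hℓ δ hδ P Sl hSl Fl hFl
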